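/- For every non-negative integer k, binom(2k, k) = Σ_{m=0}^{k} binom(k, m) Σ_{n} ((2n+2m-1)!! (2k-2m-2n-1)!!) / ((m+2n)! (k-m-2n)!), where the inner sum ranges over all integers n with -⌊k/2⌋ ≤ n ≤ ⌊k/2⌋, m + 2n ≥ 0 and k - m - 2n ≥ 0. -/

import Mathlib

open Real

noncomputable def oddDF (j : ℕ) : ℝ := (Nat.factorial (2*j) : ℝ) / (2^j * (Nat.factorial j : ℝ))

open Finset

lemma sum_eq_of_support {G : ℤ → ℝ} {s t : Finset ℤ}
    (hs : ∀ j, G j ≠ 0 → j ∈ s) (ht : ∀ j, G j ≠ 0 → j ∈ t) :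
    ∑ j ∈ s, G j = ∑ j ∈ t, G j := by
  rw [show (∑ j ∈ s, G j) = ∑ j ∈ s ∪ t, G j from
      Finset.sum_subset Finset.subset_union_left (by
        intro x _ hxs; by_contra h; exact hxs (hs x h)),
    show (∑ j ∈ t, G j) = ∑ j ∈ s ∪ t, G j from
      Finset.sum_subset Finset.subset_union_right (by
        intro x _ hxt; by_contra h; exact hxt (ht x h))]

lemma inner_reindex (k m : ℕ) (hm : m ≤ k) :
    (∑ n ∈ Finset.Icc (-((k/2 : ℕ) : ℤ)) ((k/2 : ℕ) : ℤ),
       if 0 ≤ (m:ℤ) + 2*n ∧ (m:ℤ) + 2*n ≤ (k:ℤ) then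
         oddDF ((m:ℤ) + n).toNat * oddDF ((k:ℤ) - m - n).toNat /
           ((Nat.factorial ((m:ℤ) + 2*n).toNat : ℝ) *
             (Nat.factorial ((k:ℤ) - m - 2*n).toNat : ℝ))
       else 0)
    = ∑ j ∈ Finset.range (k+1),
        if m ≤ 2*j ∧ 2*j ≤ k + m then
          oddDF j * oddDF (k-j) /
            ((Nat.factorial (2*j-m) : ℝ) * (Nat.factorial (k+m-2*j) : ℝ))
        else 0 := by
  set G : ℤ → ℝ := fun j =>
    if (m:ℤ) ≤ 2*j ∧ 2*j ≤ (k:ℤ) + m then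
      oddDF j.toNat * oddDF ((k:ℤ) - j).toNat /
        ((Nat.factorial ((2*j - (m:ℤ))).toNat : ℝ) *
          (Nat.factorial (((k:ℤ) + m - 2*j)).toNat : ℝ))
    else 0 with hG
  have hGsupp : ∀ j : ℤ, G j ≠ 0 → (m:ℤ) ≤ 2*j ∧ 2*j ≤ (k:ℤ) + m := by
    intro j hj
    by_contra h
    apply hj
    simp only [hG, if_neg h]
  -- Step A: reindex n ↦ n + m
  have stepA : (∑ n ∈ Finset.Icc (-((k/2 : ℕ) : ℤ)) ((k/2 : ℕ) : ℤ),
       if 0 ≤ (m:ℤ) + 2*n ∧ (m:ℤ) + 2*n ≤ (k:ℤ) then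
         oddDF ((m:ℤ) + n).toNat * oddDF ((k:ℤ) - m - n).toNat /
           ((Nat.factorial ((m:ℤ) + 2*n).toNat : ℝ) *
             (Nat.factorial ((k:ℤ) - m - 2*n).toNat : ℝ))
       else 0)
      = ∑ j ∈ Finset.Icc ((m:ℤ) - ((k/2 : ℕ) : ℤ)) ((m:ℤ) + ((k/2 : ℕ) : ℤ)), G j := by
    refine Finset.sum_nbij' (i := fun (n:ℤ) => n + (m:ℤ)) (j := fun (j:ℤ) => j - (m:ℤ)) ?_ ?_ ?_ ?_ ?_
    · intro a ha; simp only [Finset.mem_Icc] at *; omega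
    · intro a ha; simp only [Finset.mem_Icc] at *; omega
    · intro a _; ring
    · intro a _; ring
    · intro n _
      simp only [hG]
      by_cases h : 0 ≤ (m:ℤ) + 2*n ∧ (m:ℤ) + 2*n ≤ (k:ℤ)
      · rw [if_pos h, if_pos (by omega)]
        have e1 : ((m:ℤ) + n).toNat = (n + m).toNat := by omega
        have e2 : ((k:ℤ) - m - n).toNat = ((k:ℤ) - (n + m)).toNat := by omega
        have e3 : ((m:ℤ) + 2*n).toNat = (2*(n+m) - m).toNat := by omega
        have e4 : ((k:ℤ) - m - 2*n).toNat = ((k:ℤ) + m - 2*(n+m)).toNat := by omega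
        rw [e1, e2, e3, e4]
      · rw [if_neg h, if_neg (by omega)]
  rw [stepA]
  -- Step B: change the index set to Icc 0 k
  have stepB : ∑ j ∈ Finset.Icc ((m:ℤ) - ((k/2 : ℕ) : ℤ)) ((m:ℤ) + ((k/2 : ℕ) : ℤ)), G j
      = ∑ j ∈ Finset.Icc (0:ℤ) (k:ℤ), G j := by
    apply sum_eq_of_support
    · intro j hj
      have := hGsupp j hj
      simp only [Finset.mem_Icc]; omega
    · intro j hj
      have := hGsupp j hj
      simp only [Finset.mem_Icc]; omega
  rw [stepB]
  -- Step C: go to ℕ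
  refine Finset.sum_nbij' (i := fun (j:ℤ) => j.toNat) (j := fun (a:ℕ) => (a:ℤ)) ?_ ?_ ?_ ?_ ?_
  · intro a ha; simp only [Finset.mem_Icc, Finset.mem_range] at *; omega
  · intro a ha; simp only [Finset.mem_Icc, Finset.mem_range] at *; omega
  · intro a ha; simp only [Finset.mem_Icc] at ha
    simp only [Int.toNat_of_nonneg ha.1]
  · intro a _; simp
  · intro j hj
    simp only [Finset.mem_Icc] at hj
    simp only [hG]
    by_cases h : (m:ℤ) ≤ 2*j ∧ 2*j ≤ (k:ℤ) + m
    · rw [if_pos h, if_pos (by omega)]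
      have e1 : ((k:ℤ) - j).toNat = k - j.toNat := by omega
      have e2 : ((2*j - (m:ℤ))).toNat = 2*j.toNat - m := by omega
      have e3 : (((k:ℤ) + m - 2*j)).toNat = k + m - 2*j.toNat := by omega
      rw [e1, e2, e3]
    · rw [if_neg h, if_neg (by omega)]


lemma fact_ne (n : ℕ) : (Nat.factorial n : ℝ) ≠ 0 := by
  exact_mod_cast Nat.factorial_ne_zero n

lemma choose_as_factorial_div (n r : ℕ) (h : r ≤ n) :
    (Nat.choose n r : ℝ) =
      (Nat.factorial n : ℝ) / ((Nat.factorial r : ℝ) * (Nat.factorial (n-r) : ℝ)) := by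
  rw [eq_div_iff (by exact mul_ne_zero (fact_ne r) (fact_ne (n-r)))]
  norm_cast
  rw [← Nat.choose_mul_factorial_mul_factorial h]
  ring

lemma vand (k j : ℕ) (hj : j ≤ k) :
    ∑ m ∈ Finset.range (k+1),
      (if m ≤ 2*j ∧ 2*j ≤ k + m then (Nat.choose k m) * (Nat.choose k (2*j-m)) else 0)
    = Nat.choose (2*k) (2*j) := by
  have hpt : ∀ m, (if m ≤ 2*j ∧ 2*j ≤ k + m then (Nat.choose k m) * (Nat.choose k (2*j-m)) else 0)
      = (if m ≤ 2*j then (Nat.choose k m) * (Nat.choose k (2*j-m)) else 0) := by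
    intro m
    by_cases h1 : m ≤ 2*j
    · by_cases h2 : 2*j ≤ k + m
      · rw [if_pos ⟨h1, h2⟩, if_pos h1]
      · rw [if_neg (by tauto), if_pos h1,
          show Nat.choose k (2*j-m) = 0 from Nat.choose_eq_zero_of_lt (by omega), mul_zero]
    · rw [if_neg (by tauto), if_neg h1]
  simp only [hpt]
  have step1 : (∑ m ∈ Finset.range (k+1),
      (if m ≤ 2*j then (Nat.choose k m) * (Nat.choose k (2*j-m)) else 0))
      = ∑ m ∈ Finset.range (2*k+1),
      (if m ≤ 2*j then (Nat.choose k m) * (Nat.choose k (2*j-m)) else 0) := by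
    apply Finset.sum_subset
    · apply Finset.range_subset_range.mpr; omega
    · intro m hm hmn
      simp only [Finset.mem_range] at hm hmn
      by_cases h1 : m ≤ 2*j
      · rw [if_pos h1, Nat.choose_eq_zero_of_lt (by omega), zero_mul]
      · rw [if_neg h1]
  have step2 : (∑ m ∈ Finset.range (2*j+1),
      (if m ≤ 2*j then (Nat.choose k m) * (Nat.choose k (2*j-m)) else 0))
      = ∑ m ∈ Finset.range (2*k+1),
      (if m ≤ 2*j then (Nat.choose k m) * (Nat.choose k (2*j-m)) else 0) := by
    apply Finset.sum_subset
    · apply Finset.range_subset_range.mpr; omega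
    · intro m hm hmn
      simp only [Finset.mem_range] at hm hmn
      rw [if_neg (by omega)]
  rw [step1, ← step2]
  rw [show (2*k) = k + k by ring, Nat.add_choose_eq]
  rw [Finset.Nat.sum_antidiagonal_eq_sum_range_succ (f := fun a b => Nat.choose k a * Nat.choose k b)]
  apply Finset.sum_congr rfl
  intro m hm
  simp only [Finset.mem_range] at hm
  rw [if_pos (by omega)]

lemma final_sum (k : ℕ) :
    ∑ j ∈ Finset.range (k+1),
      oddDF j * oddDF (k-j) / (Nat.factorial k : ℝ) * (Nat.choose (2*k) (2*j) : ℝ)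
    = (Nat.choose (2*k) k : ℝ) := by
  have hpt : ∀ j ∈ Finset.range (k+1),
      oddDF j * oddDF (k-j) / (Nat.factorial k : ℝ) * (Nat.choose (2*k) (2*j) : ℝ)
      = (Nat.choose k j : ℝ) *
        ((Nat.factorial (2*k) : ℝ) / (2^k * ((Nat.factorial k : ℝ) * (Nat.factorial k : ℝ)))) := by
    intro j hj
    simp only [Finset.mem_range] at hj
    have hj' : j ≤ k := by omega
    rw [oddDF, oddDF, choose_as_factorial_div (2*k) (2*j) (by omega),
        choose_as_factorial_div k j hj']
    have e1 : 2*(k-j) = 2*k - 2*j := by omega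
    rw [e1]
    have e2 : (2:ℝ)^k = 2^j * 2^(k-j) := by rw [← pow_add]; congr 1; omega
    rw [e2]
    have n1 := fact_ne (2*j); have n2 := fact_ne j; have n3 := fact_ne (2*k - 2*j)
    have n4 := fact_ne (k-j); have n5 := fact_ne k; have n6 := fact_ne (2*k)
    have p1 : ((2:ℝ)^j) ≠ 0 := by positivity
    have p2 : ((2:ℝ)^(k-j)) ≠ 0 := by positivity
    field_simp
  rw [Finset.sum_congr rfl hpt, ← Finset.sum_mul]
  have hs : (∑ j ∈ Finset.range (k+1), (Nat.choose k j : ℝ)) = 2^k := by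
    exact_mod_cast congrArg (Nat.cast : ℕ → ℝ) (Nat.sum_range_choose k)
  rw [hs, choose_as_factorial_div (2*k) k (by omega), show 2*k - k = k by omega]
  have n5 := fact_ne k
  have p1 : ((2:ℝ)^k) ≠ 0 := by positivity
  field_simp

/-- Lemma (combinatorial identity): for every k ≥ 0,
C(2k,k) = Σ_{m=0}^{k} C(k,m) Σ_{n=-⌊k/2⌋}^{⌊k/2⌋, m+2n≥0, k-m-2n≥0}
  (2n+2m-1)!!(2k-2m-2n-1)!!/((m+2n)!(k-m-2n)!). -/
theorem double_factorial_comb_identity (k : ℕ) :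
    (Nat.choose (2*k) k : ℝ)
      = ∑ m ∈ Finset.range (k+1), (Nat.choose k m : ℝ) *
          ∑ n ∈ Finset.Icc (-((k/2 : ℕ) : ℤ)) ((k/2 : ℕ) : ℤ),
            if 0 ≤ (m:ℤ) + 2*n ∧ (m:ℤ) + 2*n ≤ (k:ℤ) then
              oddDF ((m:ℤ) + n).toNat * oddDF ((k:ℤ) - m - n).toNat /
                ((Nat.factorial ((m:ℤ) + 2*n).toNat : ℝ) *
                  (Nat.factorial ((k:ℤ) - m - 2*n).toNat : ℝ))
            else 0 := by
  have step1 : ∀ m ∈ Finset.range (k+1),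
      (Nat.choose k m : ℝ) *
        (∑ n ∈ Finset.Icc (-((k/2 : ℕ) : ℤ)) ((k/2 : ℕ) : ℤ),
          if 0 ≤ (m:ℤ) + 2*n ∧ (m:ℤ) + 2*n ≤ (k:ℤ) then
            oddDF ((m:ℤ) + n).toNat * oddDF ((k:ℤ) - m - n).toNat /
              ((Nat.factorial ((m:ℤ) + 2*n).toNat : ℝ) *
                (Nat.factorial ((k:ℤ) - m - 2*n).toNat : ℝ))
          else 0)
      = ∑ j ∈ Finset.range (k+1), (Nat.choose k m : ℝ) *
          (if m ≤ 2*j ∧ 2*j ≤ k + m then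
            oddDF j * oddDF (k-j) /
              ((Nat.factorial (2*j-m) : ℝ) * (Nat.factorial (k+m-2*j) : ℝ))
          else 0) := by
    intro m hm
    simp only [Finset.mem_range] at hm
    rw [inner_reindex k m (by omega), Finset.mul_sum]
  rw [Finset.sum_congr rfl step1, Finset.sum_comm]
  have step2 : ∀ j ∈ Finset.range (k+1),
      (∑ m ∈ Finset.range (k+1), (Nat.choose k m : ℝ) *
          (if m ≤ 2*j ∧ 2*j ≤ k + m then
            oddDF j * oddDF (k-j) /
              ((Nat.factorial (2*j-m) : ℝ) * (Nat.factorial (k+m-2*j) : ℝ))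
          else 0))
      = oddDF j * oddDF (k-j) / (Nat.factorial k : ℝ) * (Nat.choose (2*k) (2*j) : ℝ) := by
    intro j hj
    simp only [Finset.mem_range] at hj
    have hj' : j ≤ k := by omega
    have hpt : ∀ m ∈ Finset.range (k+1),
        (Nat.choose k m : ℝ) *
          (if m ≤ 2*j ∧ 2*j ≤ k + m then
            oddDF j * oddDF (k-j) /
              ((Nat.factorial (2*j-m) : ℝ) * (Nat.factorial (k+m-2*j) : ℝ))
          else 0)
        = oddDF j * oddDF (k-j) / (Nat.factorial k : ℝ) *
            ((if m ≤ 2*j ∧ 2*j ≤ k + m then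
              (Nat.choose k m) * (Nat.choose k (2*j-m)) else 0 : ℕ) : ℝ) := by
      intro m hm
      by_cases h : m ≤ 2*j ∧ 2*j ≤ k + m
      · rw [if_pos h, if_pos h]
        push_cast
        rw [choose_as_factorial_div k (2*j-m) (by omega), show k - (2*j-m) = k+m-2*j by omega]
        have n1 := fact_ne (2*j-m); have n2 := fact_ne (k+m-2*j); have n5 := fact_ne k
        field_simp
      · rw [if_neg h, if_neg h]
        push_cast
        ring
    rw [Finset.sum_congr rfl hpt, ← Finset.mul_sum]
    congr 1
    rw [← Nat.cast_sum, vand k j hj']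
  rw [Finset.sum_congr rfl step2, final_sum]
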